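/- arXiv:2509.01233 — 2 statements merged into one kernel-verified Lean document; each statement's English description precedes it below -/
import Mathlib

section
/- Let M be an MT-algebra and let ≺ denote the relation ≺_{𝓑𝓢M} on M, i.e., a ≺ c iff there exists x ∈ 𝓑𝓢M with a ≤ x ≤ c. Then ≺ is a de Vries proximity on M if and only if M is a T0-algebra. -/
/-- An interior operator on a complete Boolean algebra (Kuratowski axioms). -/
structure MTInterior {M : Type*} [CompleteBooleanAlgebra M] (box : M → M) : Prop where
  map_top : box ⊤ = ⊤
  map_inf : ∀ a b : M, box (a ⊓ b) = box a ⊓ box b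
  le_self : ∀ a : M, box a ≤ a
  le_box_box : ∀ a : M, box a ≤ box (box a)

/-- An element is open if it is a fixpoint of the interior operator. -/
def MTOpen {M : Type*} [CompleteBooleanAlgebra M] (box : M → M) (a : M) : Prop :=
  box a = a

/-- An element is closed if its complement is open. -/
def MTClosed {M : Type*} [CompleteBooleanAlgebra M] (box : M → M) (a : M) : Prop :=
  MTOpen box aᶜ

/-- An element is saturated if it is an infimum of a set of open elements. -/
def MTSat {M : Type*} [CompleteBooleanAlgebra M] (box : M → M) (a : M) : Prop :=
  ∃ S : Set M, (∀ s ∈ S, MTOpen box s) ∧ a = sInf S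

/-- An element is locally closed if it is the meet of an open and a closed element. -/
def MTLocClosed {M : Type*} [CompleteBooleanAlgebra M] (box : M → M) (a : M) : Prop :=
  ∃ u c, MTOpen box u ∧ MTClosed box c ∧ a = u ⊓ c

/-- Membership in the Boolean subalgebra `𝓑𝓢M` generated by the saturated elements. -/
inductive MTBS {M : Type*} [CompleteBooleanAlgebra M] (box : M → M) : M → Prop
  | sat (a : M) : MTSat box a → MTBS box a
  | bot : MTBS box ⊥
  | top : MTBS box ⊤
  | inf (a b : M) : MTBS box a → MTBS box b → MTBS box (a ⊓ b)
  | sup (a b : M) : MTBS box a → MTBS box b → MTBS box (a ⊔ b)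
  | compl (a : M) : MTBS box a → MTBS box aᶜ

/-- An MT-algebra is a `T₀`-algebra if every element is a supremum of elements of the
form `s ⊓ c` with `s` saturated and `c` closed. -/
def MTT0 {M : Type*} [CompleteBooleanAlgebra M] (box : M → M) : Prop :=
  ∀ a : M, a = sSup {b | (∃ s c, MTSat box s ∧ MTClosed box c ∧ b = s ⊓ c) ∧ b ≤ a}

/-- The relation `≺` on an MT-algebra: `a ≺ c` iff there is `x ∈ 𝓑𝓢M` with `a ≤ x ≤ c`. -/
def mtPrec {M : Type*} [CompleteBooleanAlgebra M] (box : M → M) (a c : M) : Prop :=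
  ∃ x, MTBS box x ∧ a ≤ x ∧ x ≤ c

/-- A de Vries proximity on a complete Boolean algebra. -/
def IsDeVries {M : Type*} [CompleteBooleanAlgebra M] (prec : M → M → Prop) : Prop :=
  prec ⊤ ⊤ ∧
  (∀ a c, prec a c → a ≤ c) ∧
  (∀ a a' c' c : M, a ≤ a' → prec a' c' → c' ≤ c → prec a c) ∧
  (∀ a c d, prec a c → prec a d → prec a (c ⊓ d)) ∧
  (∀ a c, prec a c → prec cᶜ aᶜ) ∧
  (∀ a c, prec a c → ∃ b, prec a b ∧ prec b c) ∧
  (∀ a : M, a = sSup {c | prec c a})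



section Aux
variable {M : Type*} [CompleteBooleanAlgebra M] {box : M → M}

def MTPiece {M : Type*} [CompleteBooleanAlgebra M] (box : M → M) (b : M) : Prop :=
  ∃ s c, MTSat box s ∧ MTClosed box c ∧ b = s ⊓ c

/-- `x` is a join of pieces below it. -/
def MTP {M : Type*} [CompleteBooleanAlgebra M] (box : M → M) (x : M) : Prop :=
  x ≤ sSup {b | MTPiece box b ∧ b ≤ x}

theorem mt_box_mono (hbox : MTInterior box) {a b : M} (h : a ≤ b) : box a ≤ box b := by
  have : a ⊓ b = a := inf_eq_left.mpr h
  calc box a = box (a ⊓ b) := by rw [this]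
    _ ≤ box b := by rw [hbox.map_inf]; exact inf_le_right

theorem mt_open_top (hbox : MTInterior box) : MTOpen box (⊤ : M) := hbox.map_top

theorem mt_open_bot (hbox : MTInterior box) : MTOpen box (⊥ : M) :=
  le_antisymm (hbox.le_self ⊥) bot_le

theorem mt_open_sup (hbox : MTInterior box) {u v : M}
    (hu : MTOpen box u) (hv : MTOpen box v) : MTOpen box (u ⊔ v) :=
  by
  refine le_antisymm (hbox.le_self _) (sup_le ?_ ?_)
  · conv_lhs => rw [← hu]
    exact mt_box_mono hbox le_sup_left
  · conv_lhs => rw [← hv]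
    exact mt_box_mono hbox le_sup_right

theorem mt_sat_of_open {u : M} (hu : MTOpen box u) : MTSat box u :=
  ⟨{u}, by simp [hu], by simp⟩

theorem mt_sat_top (hbox : MTInterior box) : MTSat box (⊤ : M) :=
  mt_sat_of_open (mt_open_top hbox)

theorem mt_sat_inf {a b : M} (ha : MTSat box a) (hb : MTSat box b) : MTSat box (a ⊓ b) := by
  obtain ⟨S, hS, rfl⟩ := ha
  obtain ⟨T, hT, rfl⟩ := hb
  exact ⟨S ∪ T, by rintro s (hs | hs); exacts [hS s hs, hT s hs], (sInf_union).symm⟩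

theorem mt_closed_top (hbox : MTInterior box) : MTClosed box (⊤ : M) := by
  simpa [MTClosed] using mt_open_bot hbox

theorem mt_closed_inf (hbox : MTInterior box) {a b : M}
    (ha : MTClosed box a) (hb : MTClosed box b) : MTClosed box (a ⊓ b) := by
  simpa [MTClosed, compl_inf] using mt_open_sup hbox ha hb

theorem mt_piece_inf (hbox : MTInterior box) {p q : M}
    (hp : MTPiece box p) (hq : MTPiece box q) : MTPiece box (p ⊓ q) := by
  obtain ⟨s, c, hs, hc, rfl⟩ := hp
  obtain ⟨t, d, ht, hd, rfl⟩ := hq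
  exact ⟨s ⊓ t, c ⊓ d, mt_sat_inf hs ht, mt_closed_inf hbox hc hd, by
    rw [inf_inf_inf_comm]⟩

theorem mtBS_of_closed {c : M} (hc : MTClosed box c) : MTBS box c := by
  have : MTBS box cᶜ := MTBS.sat _ (mt_sat_of_open hc)
  simpa using MTBS.compl _ this

theorem mtBS_of_piece {p : M} (hp : MTPiece box p) : MTBS box p := by
  obtain ⟨s, c, hs, hc, rfl⟩ := hp
  exact MTBS.inf _ _ (MTBS.sat _ hs) (mtBS_of_closed hc)

theorem mtP_sup {a b : M} (ha : MTP box a) (hb : MTP box b) : MTP box (a ⊔ b) := by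
  refine sup_le (ha.trans ?_) (hb.trans ?_) <;>
  · refine sSup_le fun p hp => le_sSup ⟨hp.1, hp.2.trans (by simp)⟩

theorem mtP_inf (hbox : MTInterior box) {a b : M} (ha : MTP box a) (hb : MTP box b) :
    MTP box (a ⊓ b) := by
  refine le_trans (inf_le_inf ha hb) ?_
  rw [sSup_inf_sSup]
  refine iSup_le fun p => iSup_le fun hp => ?_
  exact le_sSup ⟨mt_piece_inf hbox hp.1.1 hp.2.1, inf_le_inf hp.1.2 hp.2.2⟩

theorem mtP_of_sat (hbox : MTInterior box) {a : M} (ha : MTSat box a) : MTP box a :=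
  le_sSup ⟨⟨a, ⊤, ha, mt_closed_top hbox, (inf_top_eq a).symm⟩, le_rfl⟩

theorem mtP_compl_of_sat (hbox : MTInterior box) {a : M} (ha : MTSat box a) : MTP box aᶜ := by
  obtain ⟨S, hS, rfl⟩ := ha
  rw [compl_sInf]
  refine iSup_le fun u => iSup_le fun hu => ?_
  refine le_sSup ⟨⟨⊤, uᶜ, mt_sat_top hbox, ?_, (top_inf_eq _).symm⟩, ?_⟩
  · simpa [MTClosed] using hS u hu
  · exact le_iSup_of_le u (le_iSup_of_le hu le_rfl)

theorem mtBS_P (hbox : MTInterior box) {x : M} (hx : MTBS box x) :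
    MTP box x ∧ MTP box xᶜ := by
  induction hx with
  | sat a ha => exact ⟨mtP_of_sat hbox ha, mtP_compl_of_sat hbox ha⟩
  | bot => exact ⟨bot_le, by rw [compl_bot]; exact mtP_of_sat hbox (mt_sat_top hbox)⟩
  | top => exact ⟨mtP_of_sat hbox (mt_sat_top hbox), by rw [compl_top]; exact bot_le⟩
  | inf a b _ _ iha ihb =>
      exact ⟨mtP_inf hbox iha.1 ihb.1, by rw [compl_inf]; exact mtP_sup iha.2 ihb.2⟩
  | sup a b _ _ iha ihb =>
      exact ⟨mtP_sup iha.1 ihb.1, by rw [compl_sup]; exact mtP_inf hbox iha.2 ihb.2⟩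
  | compl a _ iha => exact ⟨iha.2, by rw [compl_compl]; exact iha.1⟩

end Aux


/-- `≺_{𝓑𝓢M}` is a de Vries proximity on `M` iff `M` is a `T₀`-algebra. -/
theorem stmt_2 {M : Type*} [CompleteBooleanAlgebra M] (box : M → M) (hbox : MTInterior box) :
    IsDeVries (mtPrec box) ↔ MTT0 box := by
  constructor
  · intro ⟨_, _, _, _, _, _, hsup⟩ a
    refine le_antisymm ?_ (sSup_le fun b hb => hb.2)
    calc a = sSup {c | mtPrec box c a} := hsup a
      _ ≤ _ := by
        refine sSup_le fun c hc => ?_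
        obtain ⟨x, hxBS, hcx, hxa⟩ := hc
        refine hcx.trans (((mtBS_P hbox hxBS).1).trans (sSup_le fun p hp => ?_))
        exact le_sSup ⟨hp.1, hp.2.trans hxa⟩
  · intro hT0
    refine ⟨⟨⊤, MTBS.top, le_rfl, le_rfl⟩, ?_, ?_, ?_, ?_, ?_, ?_⟩
    · rintro a c ⟨x, _, h1, h2⟩; exact h1.trans h2
    · rintro a a' c' c ha ⟨x, hx, h1, h2⟩ hc; exact ⟨x, hx, ha.trans h1, h2.trans hc⟩
    · rintro a c d ⟨x, hx, h1, h2⟩ ⟨y, hy, h3, h4⟩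
      exact ⟨x ⊓ y, MTBS.inf _ _ hx hy, le_inf h1 h3, inf_le_inf h2 h4⟩
    · rintro a c ⟨x, hx, h1, h2⟩
      exact ⟨xᶜ, MTBS.compl _ hx, compl_le_compl h2, compl_le_compl h1⟩
    · rintro a c ⟨x, hx, h1, h2⟩
      exact ⟨x, ⟨x, hx, h1, le_rfl⟩, ⟨x, hx, le_rfl, h2⟩⟩
    · intro a
      refine le_antisymm ?_ (sSup_le ?_)
      · calc a = sSup {b | (∃ s c, MTSat box s ∧ MTClosed box c ∧ b = s ⊓ c) ∧ b ≤ a} := hT0 a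
          _ ≤ sSup {c | mtPrec box c a} := sSup_le fun b hb => le_sSup ⟨b, mtBS_of_piece hb.1, le_rfl, hb.2⟩
      · rintro c ⟨x, _, h1, h2⟩; exact h1.trans h2
end

section
/- Let f : M₁ → M₂ and g : M₂ → M₃ be Raney morphisms between MT-algebras. Then the map g ⋆ f : M₁ → M₃ defined by (g ⋆ f)(a) = ⨆{ g(f(x)) | x ∈ 𝓑𝓢M₁, x ≤ a } is a Raney morphism. -/
/-- A Raney morphism between MT-algebras. -/
structure MTRaneyHom {M M' : Type*} [CompleteBooleanAlgebra M] [CompleteBooleanAlgebra M']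
    (box : M → M) (box' : M' → M') (f : M → M') : Prop where
  sat_map : ∀ a : M, MTSat box a → MTSat box' (f a)
  sat_sup : ∀ a b : M, MTSat box a → MTSat box b → f (a ⊔ b) = f a ⊔ f b
  map_bot : f ⊥ = ⊥
  sat_sInf : ∀ S : Set M, (∀ s ∈ S, MTSat box s) → f (sInf S) = sInf (f '' S)
  open_map : ∀ a : M, MTOpen box a → MTOpen box' (f a)
  map_top : f ⊤ = ⊤
  open_sSup : ∀ S : Set M, (∀ s ∈ S, MTOpen box s) → f (sSup S) = sSup (f '' S)
  map_inf : ∀ a b : M, f (a ⊓ b) = f a ⊓ f b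
  bs_sup : ∀ x y : M, MTBS box x → MTBS box y → f (x ⊔ y) = f x ⊔ f y
  approx : ∀ a : M, f a = sSup (f '' {x | MTBS box x ∧ x ≤ a})

/-- The identity Raney morphism `id_M`. -/
def raneyId {M : Type*} [CompleteBooleanAlgebra M] (box : M → M) (a : M) : M :=
  sSup {x | MTBS box x ∧ x ≤ a}

/-- The composition `g ⋆ f` of Raney morphisms. -/
def raneyComp {M₁ M₂ M₃ : Type*} [CompleteBooleanAlgebra M₁] [CompleteBooleanAlgebra M₂]
    [CompleteBooleanAlgebra M₃] (box₁ : M₁ → M₁) (g : M₂ → M₃) (f : M₁ → M₂) (a : M₁) : M₃ :=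
  sSup ((fun x => g (f x)) '' {x | MTBS box₁ x ∧ x ≤ a})

section Aux

variable {M M' : Type*} [CompleteBooleanAlgebra M] [CompleteBooleanAlgebra M']
  {box : M → M} {box' : M' → M'} {f : M → M'}

lemma raney_mono (hf : MTRaneyHom box box' f) : Monotone f := by
  intro a b hab
  have h := hf.map_inf a b
  rw [inf_eq_left.mpr hab] at h
  exact h ▸ inf_le_right

lemma mt_box_mono_s11 (hbox : MTInterior box) : Monotone box := by
  intro a b hab
  have h := hbox.map_inf a b
  rw [inf_eq_left.mpr hab] at h
  exact h ▸ inf_le_right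

lemma mt_open_sat {a : M} (ha : MTOpen box a) : MTSat box a :=
  ⟨{a}, fun s hs => by simpa [Set.mem_singleton_iff.mp hs], sInf_singleton.symm⟩

lemma mt_open_sSup (hbox : MTInterior box) (S : Set M) (hS : ∀ s ∈ S, MTOpen box s) :
    MTOpen box (sSup S) := by
  refine le_antisymm (hbox.le_self _) (sSup_le fun s hs => ?_)
  calc s = box s := (hS s hs).symm
    _ ≤ box (sSup S) := mt_box_mono_s11 hbox (le_sSup hs)

lemma mt_sat_sInf (S : Set M) (hS : ∀ s ∈ S, MTSat box s) : MTSat box (sInf S) := by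
  choose T hT1 hT2 using hS
  refine ⟨⋃ s, ⋃ h : s ∈ S, T s h, ?_, ?_⟩
  · intro t ht
    simp only [Set.mem_iUnion] at ht
    obtain ⟨s, hs, hts⟩ := ht
    exact hT1 s hs t hts
  · apply le_antisymm
    · apply le_sInf
      intro t ht
      simp only [Set.mem_iUnion] at ht
      obtain ⟨s, hs, hts⟩ := ht
      exact le_trans (sInf_le hs) (le_of_eq_of_le (hT2 s hs) (sInf_le hts))
    · apply le_sInf
      intro s hs
      rw [hT2 s hs]
      apply le_sInf
      intro t ht
      exact sInf_le (Set.mem_iUnion.mpr ⟨s, Set.mem_iUnion.mpr ⟨hs, ht⟩⟩)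

lemma raney_compl (hf : MTRaneyHom box box' f) (x : M) (hx : MTBS box x) :
    f xᶜ = (f x)ᶜ := by
  have h1 : f x ⊔ f xᶜ = ⊤ := by
    rw [← hf.bs_sup x xᶜ hx (MTBS.compl x hx), sup_compl_eq_top, hf.map_top]
  have h2 : f x ⊓ f xᶜ = ⊥ := by
    rw [← hf.map_inf, inf_compl_eq_bot, hf.map_bot]
  exact (isCompl_iff.mpr ⟨disjoint_iff.mpr h2, codisjoint_iff.mpr h1⟩).compl_eq.symm

lemma raney_bs (hf : MTRaneyHom box box' f) (x : M) (hx : MTBS box x) :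
    MTBS box' (f x) := by
  induction hx with
  | sat a ha => exact MTBS.sat _ (hf.sat_map a ha)
  | bot => rw [hf.map_bot]; exact MTBS.bot
  | top => rw [hf.map_top]; exact MTBS.top
  | inf a b ha hb iha ihb => rw [hf.map_inf]; exact MTBS.inf _ _ iha ihb
  | sup a b ha hb iha ihb => rw [hf.bs_sup a b ha hb]; exact MTBS.sup _ _ iha ihb
  | compl a ha iha => rw [raney_compl hf a ha]; exact MTBS.compl _ iha

end Aux

lemma raneyComp_bs {M₁ M₂ M₃ : Type*} [CompleteBooleanAlgebra M₁] [CompleteBooleanAlgebra M₂]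
    [CompleteBooleanAlgebra M₃] {box₁ : M₁ → M₁} {box₂ : M₂ → M₂} {box₃ : M₃ → M₃}
    {f : M₁ → M₂} {g : M₂ → M₃}
    (hf : MTRaneyHom box₁ box₂ f) (hg : MTRaneyHom box₂ box₃ g)
    (x : M₁) (hx : MTBS box₁ x) : raneyComp box₁ g f x = g (f x) := by
  apply le_antisymm
  · apply sSup_le
    rintro _ ⟨y, ⟨hy, hyx⟩, rfl⟩
    exact raney_mono hg (raney_mono hf hyx)
  · exact le_sSup ⟨x, ⟨hx, le_rfl⟩, rfl⟩

/-- the composition `g ⋆ f` of Raney morphisms is a Raney morphism. -/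
theorem stmt_11 {M₁ M₂ M₃ : Type*} [CompleteBooleanAlgebra M₁] [CompleteBooleanAlgebra M₂]
    [CompleteBooleanAlgebra M₃]
    (box₁ : M₁ → M₁) (box₂ : M₂ → M₂) (box₃ : M₃ → M₃)
    (hbox₁ : MTInterior box₁) (hbox₂ : MTInterior box₂) (hbox₃ : MTInterior box₃)
    (f : M₁ → M₂) (g : M₂ → M₃)
    (hf : MTRaneyHom box₁ box₂ f) (hg : MTRaneyHom box₂ box₃ g) :
    MTRaneyHom box₁ box₃ (raneyComp box₁ g f) := by
  constructor
  · -- sat_map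
    intro a ha
    rw [raneyComp_bs hf hg a (MTBS.sat a ha)]
    exact hg.sat_map _ (hf.sat_map a ha)
  · -- sat_sup
    intro a b ha hb
    rw [raneyComp_bs hf hg _ (MTBS.sup a b (MTBS.sat a ha) (MTBS.sat b hb)),
      raneyComp_bs hf hg a (MTBS.sat a ha), raneyComp_bs hf hg b (MTBS.sat b hb),
      hf.sat_sup a b ha hb, hg.sat_sup _ _ (hf.sat_map a ha) (hf.sat_map b hb)]
  · -- map_bot
    rw [raneyComp_bs hf hg ⊥ MTBS.bot, hf.map_bot, hg.map_bot]
  · -- sat_sInf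
    intro S hS
    have hsat : MTSat box₁ (sInf S) := mt_sat_sInf S hS
    rw [raneyComp_bs hf hg _ (MTBS.sat _ hsat), hf.sat_sInf S hS,
      hg.sat_sInf (f '' S) (by rintro _ ⟨s, hs, rfl⟩; exact hf.sat_map s (hS s hs)),
      ← Set.image_comp]
    congr 1
    exact (Set.image_congr fun s hs =>
      raneyComp_bs hf hg s (MTBS.sat s (hS s hs))).symm
  · -- open_map
    intro a ha
    rw [raneyComp_bs hf hg a (MTBS.sat a (mt_open_sat ha))]
    exact hg.open_map _ (hf.open_map a ha)
  · -- map_top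
    rw [raneyComp_bs hf hg ⊤ MTBS.top, hf.map_top, hg.map_top]
  · -- open_sSup
    intro S hS
    have hop : MTOpen box₁ (sSup S) := mt_open_sSup hbox₁ S hS
    rw [raneyComp_bs hf hg _ (MTBS.sat _ (mt_open_sat hop)), hf.open_sSup S hS,
      hg.open_sSup (f '' S) (by rintro _ ⟨s, hs, rfl⟩; exact hf.open_map s (hS s hs)),
      ← Set.image_comp]
    congr 1
    exact (Set.image_congr fun s hs =>
      raneyComp_bs hf hg s (MTBS.sat s (mt_open_sat (hS s hs)))).symm
  · -- map_inf
    intro a b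
    apply le_antisymm
    · apply sSup_le
      rintro _ ⟨x, ⟨hx, hxab⟩, rfl⟩
      exact le_inf (le_sSup ⟨x, ⟨hx, hxab.trans inf_le_left⟩, rfl⟩)
        (le_sSup ⟨x, ⟨hx, hxab.trans inf_le_right⟩, rfl⟩)
    · show sSup _ ⊓ sSup _ ≤ _
      rw [sSup_inf_sSup]
      apply iSup₂_le
      rintro ⟨p, q⟩ ⟨⟨x, ⟨hx, hxa⟩, rfl⟩, ⟨y, ⟨hy, hyb⟩, rfl⟩⟩
      show g (f x) ⊓ g (f y) ≤ _
      rw [← hg.map_inf, ← hf.map_inf]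
      exact le_sSup ⟨x ⊓ y, ⟨MTBS.inf x y hx hy, inf_le_inf hxa hyb⟩, rfl⟩
  · -- bs_sup
    intro x y hx hy
    rw [raneyComp_bs hf hg _ (MTBS.sup x y hx hy), raneyComp_bs hf hg x hx,
      raneyComp_bs hf hg y hy, hf.bs_sup x y hx hy,
      hg.bs_sup (f x) (f y) (raney_bs hf x hx) (raney_bs hf y hy)]
  · -- approx
    intro a
    show raneyComp box₁ g f a = _
    rw [Set.image_congr (fun x hx => raneyComp_bs hf hg x hx.1)]
    rfl
end
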